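/- arXiv:1110.0897 — 3 statements merged into one kernel-verified Lean document; each statement's English description precedes it below -/
import Mathlib

section
/- Let H = [H1 H2] have full column rank with QR decomposition H = [Q1 Q2]·[[R1, E],[0, R2]]. If H2^T H2 is diagonal and E^T E is diagonal, then R2 is a diagonal matrix. -/
/-!
The second block column of the QR decomposition reads `H2 = [Q1 Q2] * [E; R2]`, and `[Q1 Q2]` has
orthonormal columns, so `R2ᵀ * R2 = H2ᵀ * H2 - Eᵀ * E` is diagonal. An upper triangular matrix with
nonzero diagonal and diagonal Gram matrix is diagonal, by induction on the rows.
-/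

open Matrix

namespace Matrix

variable {α m n p q : Type*}

theorem transpose_mul_self_fromRows [Semiring α] [Fintype n] [Fintype p]
    (A : Matrix n m α) (B : Matrix p m α) :
    (fromRows A B)ᵀ * fromRows A B = Aᵀ * A + Bᵀ * B := by
  rw [transpose_fromRows, fromCols_mul_fromRows]

theorem transpose_mul_self_mul_of_transpose_mul_self_eq_one [CommSemiring α] [Fintype n]
    [DecidableEq n] [Fintype q] {Q : Matrix q n α} (hQ : Qᵀ * Q = 1) (X : Matrix n p α) :
    (Q * X)ᵀ * (Q * X) = Xᵀ * X := by
  rw [transpose_mul, Matrix.mul_assoc, ← Matrix.mul_assoc Qᵀ, hQ, Matrix.one_mul]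

theorem BlockTriangular.isDiag_of_isDiag_transpose_mul_self [Semiring α] [NoZeroDivisors α]
    [Fintype n] [LinearOrder n] {A : Matrix n n α} (hA : A.BlockTriangular id)
    (hdiag : ∀ i, A i i ≠ 0) (h : (Aᵀ * A).IsDiag) : A.IsDiag := by
  have upper : ∀ i j, i < j → A i j = 0 := by
    intro i
    induction i using WellFoundedLT.induction with
    | ind i ih =>
      intro j hij
      -- rows above `i` vanish in column `j` by induction, rows below `i` in column `i` by triangularity
      have hsum : (Aᵀ * A) i j = A i i * A i j := by
        rw [mul_apply]
        refine Finset.sum_eq_single i (fun l _ hli => ?_) (by simp)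
        rcases hli.lt_or_gt with hli | hil
        · rw [ih l hli j (hli.trans hij), mul_zero]
        · rw [transpose_apply, hA hil, zero_mul]
      have h0 : A i i * A i j = 0 := hsum ▸ h hij.ne
      exact (mul_eq_zero.mp h0).resolve_left (hdiag i)
  intro i j hij
  rcases hij.lt_or_gt with hij | hji
  · exact upper i j hij
  · exact hA hji

end Matrix

theorem stmt1_general {m k1 k2 : ℕ}
    (H1 : Matrix (Fin m) (Fin k1) ℝ) (H2 : Matrix (Fin m) (Fin k2) ℝ)
    (Q1 : Matrix (Fin m) (Fin k1) ℝ) (Q2 : Matrix (Fin m) (Fin k2) ℝ)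
    (R1 : Matrix (Fin k1) (Fin k1) ℝ) (E : Matrix (Fin k1) (Fin k2) ℝ)
    (R2 : Matrix (Fin k2) (Fin k2) ℝ)
    (hQR : Matrix.fromCols H1 H2 =
      Matrix.fromCols Q1 Q2 * Matrix.fromBlocks R1 E 0 R2)
    (hQ : (Matrix.fromCols Q1 Q2)ᵀ * Matrix.fromCols Q1 Q2 = 1)
    (hTri : (Matrix.fromBlocks R1 E 0 R2).BlockTriangular
      (Sum.elim (fun i : Fin k1 => (i : ℕ)) (fun j : Fin k2 => k1 + (j : ℕ))))
    (hPos : ∀ i, 0 < Matrix.fromBlocks R1 E 0 R2 i i)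
    (hDiag1 : (H2ᵀ * H2).IsDiag) (hDiag2 : (Eᵀ * E).IsDiag) :
    R2.IsDiag := by
  have hH2 : H2 = fromCols Q1 Q2 * fromRows E R2 := by
    simpa [← fromCols_fromRows_eq_fromBlocks, mul_fromCols] using congrArg toCols₂ hQR
  have hgram : H2ᵀ * H2 = Eᵀ * E + R2ᵀ * R2 := by
    rw [hH2, transpose_mul_self_mul_of_transpose_mul_self_eq_one hQ, transpose_mul_self_fromRows]
  have hR2 : R2.BlockTriangular id := fun i j hji => by
    simpa using hTri (i := .inr i) (j := .inr j) (by simpa using hji)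
  refine hR2.isDiag_of_isDiag_transpose_mul_self
    (fun i => (by simpa using hPos (.inr i) : 0 < R2 i i).ne') ?_
  rw [eq_sub_of_add_eq' hgram.symm]
  exact hDiag1.sub hDiag2

/-- H = [H1 H2] full column rank with QR decomposition
H = [Q1 Q2]·[[R1,E],[0,R2]]; if H2ᵀH2 and EᵀE are diagonal then R2 is diagonal. -/
theorem stmt1 {m k1 k2 : ℕ}
    (H1 : Matrix (Fin m) (Fin k1) ℝ) (H2 : Matrix (Fin m) (Fin k2) ℝ)
    (Q1 : Matrix (Fin m) (Fin k1) ℝ) (Q2 : Matrix (Fin m) (Fin k2) ℝ)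
    (R1 : Matrix (Fin k1) (Fin k1) ℝ) (E : Matrix (Fin k1) (Fin k2) ℝ)
    (R2 : Matrix (Fin k2) (Fin k2) ℝ)
    (hrank : (Matrix.fromCols H1 H2).rank = k1 + k2)
    (hQR : Matrix.fromCols H1 H2 =
      Matrix.fromCols Q1 Q2 * Matrix.fromBlocks R1 E 0 R2)
    (hQ : (Matrix.fromCols Q1 Q2)ᵀ * Matrix.fromCols Q1 Q2 = 1)
    (hTri : (Matrix.fromBlocks R1 E 0 R2).BlockTriangular
      (Sum.elim (fun i : Fin k1 => (i : ℕ)) (fun j : Fin k2 => k1 + (j : ℕ))))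
    (hPos : ∀ i, 0 < Matrix.fromBlocks R1 E 0 R2 i i)
    (hE : E = Q1ᵀ * H2)
    (hDiag1 : (H2ᵀ * H2).IsDiag) (hDiag2 : (Eᵀ * E).IsDiag) :
    R2.IsDiag :=
  stmt1_general H1 H2 Q1 Q2 R1 E R2 hQR hQ hTri hPos hDiag1 hDiag2
end

section
/- If real matrices A1,...,Ak of size m×n each satisfy Ai^T Ai = I and Ai^T Aj = -Aj^T Ai for all i ≠ j, then for any vector h ∈ ℝ^n, the matrix H = [A1 h, A2 h, ..., Ak h] satisfies H^T H = ‖h‖² · I. -/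
open Matrix

lemma aux_dot {m n : ℕ} (B C : Matrix (Fin m) (Fin n) ℝ) (h : Fin n → ℝ) :
    B.mulVec h ⬝ᵥ C.mulVec h = h ⬝ᵥ (Bᵀ * C).mulVec h := by
  rw [Matrix.dotProduct_mulVec, Matrix.dotProduct_mulVec, ← Matrix.vecMul_vecMul,
    Matrix.vecMul_transpose]

/-- If A1,...,Ak (m×n real) satisfy Aiᵀ Ai = I and Aiᵀ Aj = -Ajᵀ Ai
for i ≠ j, then for any h ∈ ℝⁿ, H = [A1 h, ..., Ak h] satisfies Hᵀ H = ‖h‖² • I. -/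
theorem stmt3 {m n k : ℕ} (A : Fin k → Matrix (Fin m) (Fin n) ℝ)
    (hOrth : ∀ i, (A i)ᵀ * A i = 1)
    (hQOC : ∀ i j, i ≠ j → (A i)ᵀ * A j = -((A j)ᵀ * A i))
    (h : Fin n → ℝ) :
    (Matrix.of fun r c => (A c).mulVec h r)ᵀ *
        (Matrix.of fun r c => (A c).mulVec h r) =
      (‖(EuclideanSpace.equiv (Fin n) ℝ).symm h‖ ^ 2) • (1 : Matrix (Fin k) (Fin k) ℝ) := by
  have hnorm : ‖(EuclideanSpace.equiv (Fin n) ℝ).symm h‖ ^ 2 = h ⬝ᵥ h := by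
    rw [EuclideanSpace.norm_eq, Real.sq_sqrt (by positivity)]
    simp [dotProduct, sq]
  ext i j
  have hentry : ((Matrix.of fun r c => (A c).mulVec h r)ᵀ *
      (Matrix.of fun r c => (A c).mulVec h r)) i j
      = (A i).mulVec h ⬝ᵥ (A j).mulVec h := by
    simp [Matrix.mul_apply, dotProduct]
  rw [hentry, aux_dot]
  by_cases hij : i = j
  · subst hij
    rw [hOrth i, hnorm]
    simp [Matrix.one_apply]
  · rw [hQOC i j hij]
    have : h ⬝ᵥ ((A j)ᵀ * A i).mulVec h = h ⬝ᵥ (((A j)ᵀ * A i)ᵀ).mulVec h := by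
      rw [Matrix.dotProduct_mulVec, ← Matrix.mulVec_transpose, dotProduct_comm]
    have h2 : h ⬝ᵥ ((A j)ᵀ * A i).mulVec h = h ⬝ᵥ ((A i)ᵀ * A j).mulVec h := by
      rw [this, Matrix.transpose_mul, Matrix.transpose_transpose]
    rw [hQOC i j hij] at h2
    have h0 : h ⬝ᵥ ((A j)ᵀ * A i).mulVec h = 0 := by
      have := h2
      rw [Matrix.neg_mulVec, dotProduct_neg] at this
      linarith
    simp [Matrix.neg_mulVec, h0, Matrix.one_apply, hij]
end

section
/- Under the hypotheses of the 2-block theorem—H1^T H1 = ‖h‖²·I, H2^T H2 = ‖h‖²·I, QR decomposition H = [H1 H2] = QR with R = [[R1,E],[0,R2]], R1 = ‖h‖·I—we have R2^T R2 = ‖h‖²·I − E^T E; hence if E^T E is diagonal then R2 is diagonal. -/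
/-!
Since `Q` has orthonormal columns, `Hᵀ H = Rᵀ R`; comparing the lower-right blocks gives
`H2ᵀ H2 = Eᵀ E + R2ᵀ R2`. If `Eᵀ E` is diagonal, so is `R2ᵀ R2`, and an upper triangular
matrix `R` with nonzero diagonal and `Rᵀ R` diagonal is diagonal: row by row,
`(Rᵀ R) i j = R i i * R i j` for `i < j` once the rows above `i` are known to be diagonal.
-/

open Matrix

namespace Matrix

theorem transpose_mul_self_eq_of_eq_mul {m n p R : Type*} [Fintype m] [Fintype n]
    [DecidableEq n] [CommSemiring R] {A : Matrix m p R} {Q : Matrix m n R} {B : Matrix n p R}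
    (hA : A = Q * B) (hQ : Qᵀ * Q = 1) : Aᵀ * A = Bᵀ * B := by
  rw [hA, transpose_mul, Matrix.mul_assoc, ← Matrix.mul_assoc Qᵀ, hQ, Matrix.one_mul]

theorem transpose_mul_self_eq_of_fromCols_eq_mul_fromBlocks {m k₁ k₂ R : Type*}
    [Fintype m] [Fintype k₁] [Fintype k₂] [DecidableEq k₁] [DecidableEq k₂] [CommSemiring R]
    {H₁ : Matrix m k₁ R} {H₂ : Matrix m k₂ R} {Q : Matrix m (k₁ ⊕ k₂) R}
    {R₁ : Matrix k₁ k₁ R} {E : Matrix k₁ k₂ R} {R₂ : Matrix k₂ k₂ R}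
    (hQR : fromCols H₁ H₂ = Q * fromBlocks R₁ E 0 R₂) (hQ : Qᵀ * Q = 1) :
    H₂ᵀ * H₂ = Eᵀ * E + R₂ᵀ * R₂ := by
  have hgram := congrArg toBlocks₂₂ (transpose_mul_self_eq_of_eq_mul hQR hQ)
  simpa only [transpose_fromCols, fromRows_mul_fromCols, fromBlocks_transpose, transpose_zero,
    fromBlocks_multiply, toBlocks_fromBlocks₂₂, Matrix.mul_zero, add_zero] using hgram

theorem IsDiag.of_blockTriangular_of_isDiag_transpose_mul {ι R : Type*} [Fintype ι]
    [LinearOrder ι] [Semiring R] [NoZeroDivisors R] {M : Matrix ι ι R}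
    (hM : M.BlockTriangular id) (hdiag : ∀ i, M i i ≠ 0) (hgram : (Mᵀ * M).IsDiag) :
    M.IsDiag := by
  have upper : ∀ i j, i < j → M i j = 0 := by
    intro i
    induction i using WellFoundedLT.induction with
    | _ i ih =>
      intro j hij
      have hentry : (Mᵀ * M) i j = M i i * M i j := by
        rw [mul_apply]
        refine Finset.sum_eq_single i (fun l _ hli => ?_) (by simp)
        rcases lt_or_gt_of_ne hli with hlt | hgt
        · rw [ih l hlt j (hlt.trans hij), mul_zero]
        · rw [transpose_apply, hM hgt, zero_mul]
      exact (mul_eq_zero.mp (hentry ▸ hgram hij.ne)).resolve_left (hdiag i)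
  intro i j hij
  rcases lt_or_gt_of_ne hij with hlt | hgt
  · exact upper i j hlt
  · exact hM hgt

end Matrix

theorem stmt15_general {m k : ℕ}
    (H1 H2 Q1 Q2 : Matrix (Fin m) (Fin k) ℝ)
    (R1 E R2 : Matrix (Fin k) (Fin k) ℝ)
    (nh : ℝ)
    (hH2 : H2ᵀ * H2 = (nh ^ 2) • (1 : Matrix (Fin k) (Fin k) ℝ))
    (hQR : Matrix.fromCols H1 H2 =
      Matrix.fromCols Q1 Q2 * Matrix.fromBlocks R1 E 0 R2)
    (hQ : (Matrix.fromCols Q1 Q2)ᵀ * Matrix.fromCols Q1 Q2 = 1)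
    (hTri : (Matrix.fromBlocks R1 E 0 R2).BlockTriangular
      (Sum.elim (fun i : Fin k => (i : ℕ)) (fun j : Fin k => k + (j : ℕ))))
    (hPos : ∀ i, 0 < Matrix.fromBlocks R1 E 0 R2 i i) :
    R2ᵀ * R2 = (nh ^ 2) • (1 : Matrix (Fin k) (Fin k) ℝ) - Eᵀ * E ∧
      ((Eᵀ * E).IsDiag → R2.IsDiag) := by
  have hR2 : R2ᵀ * R2 = (nh ^ 2) • (1 : Matrix (Fin k) (Fin k) ℝ) - Eᵀ * E := by
    rw [← hH2, transpose_mul_self_eq_of_fromCols_eq_mul_fromBlocks hQR hQ, add_sub_cancel_left]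
  refine ⟨hR2, fun hEE => ?_⟩
  have hTri₂ : R2.BlockTriangular id := fun i j hji => by
    simpa using hTri (i := Sum.inr i) (j := Sum.inr j) (by simpa using hji)
  have hPos₂ : ∀ i, R2 i i ≠ 0 := fun i => by simpa using (hPos (Sum.inr i)).ne'
  exact IsDiag.of_blockTriangular_of_isDiag_transpose_mul hTri₂ hPos₂
    (hR2 ▸ (isDiag_smul_one _ _).sub hEE)

/-- Under the 2-block theorem hypotheses — H1ᵀH1 = ‖h‖²I,
H2ᵀH2 = ‖h‖²I, QR decomposition [H1 H2] = [Q1 Q2]·[[R1,E],[0,R2]] with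
Q orthonormal, R upper triangular with positive diagonal, R1 = ‖h‖I,
Q1 = (1/‖h‖)H1, E = Q1ᵀH2 — we have R2ᵀR2 = ‖h‖²I − EᵀE; hence if EᵀE
is diagonal then R2 is diagonal. -/
theorem stmt15 {m n k : ℕ} (h : Fin n → ℝ) (hne : h ≠ 0)
    (H1 H2 Q1 Q2 : Matrix (Fin m) (Fin k) ℝ)
    (R1 E R2 : Matrix (Fin k) (Fin k) ℝ)
    (nh : ℝ) (hnh : nh = ‖(EuclideanSpace.equiv (Fin n) ℝ).symm h‖)
    (hH1 : H1ᵀ * H1 = (nh ^ 2) • (1 : Matrix (Fin k) (Fin k) ℝ))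
    (hH2 : H2ᵀ * H2 = (nh ^ 2) • (1 : Matrix (Fin k) (Fin k) ℝ))
    (hrank : (Matrix.fromCols H1 H2).rank = k + k)
    (hQR : Matrix.fromCols H1 H2 =
      Matrix.fromCols Q1 Q2 * Matrix.fromBlocks R1 E 0 R2)
    (hQ : (Matrix.fromCols Q1 Q2)ᵀ * Matrix.fromCols Q1 Q2 = 1)
    (hTri : (Matrix.fromBlocks R1 E 0 R2).BlockTriangular
      (Sum.elim (fun i : Fin k => (i : ℕ)) (fun j : Fin k => k + (j : ℕ))))
    (hPos : ∀ i, 0 < Matrix.fromBlocks R1 E 0 R2 i i)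
    (hR1 : R1 = nh • (1 : Matrix (Fin k) (Fin k) ℝ))
    (hQ1 : Q1 = nh⁻¹ • H1)
    (hE : E = Q1ᵀ * H2) :
    R2ᵀ * R2 = (nh ^ 2) • (1 : Matrix (Fin k) (Fin k) ℝ) - Eᵀ * E ∧
      ((Eᵀ * E).IsDiag → R2.IsDiag) :=
  stmt15_general H1 H2 Q1 Q2 R1 E R2 nh hH2 hQR hQ hTri hPos
end
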